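/- Let K be an edge-path connected simplicial complex, v₀ a vertex of K, and for j = 1,...,n let i_j : K^{n−1} → Kⁿ be the simplicial map inserting v₀ in the j-th coordinate: i_j(σ₁,...,σ_{n−1}) = (σ₁,...,σ_{j−1}, v₀, σ_j,...,σ_{n−1}). Then scat(K^{n−1}) = SD(i₁,...,iₙ). -/

import Mathlib

/-- An abstract simplicial complex on vertex type `V`. -/
structure ASC (V : Type) where
  faces : Set (Finset V)
  nonempty_of_mem : ∀ {s : Finset V}, s ∈ faces → s.Nonempty
  down_closed : ∀ {s t : Finset V}, s ∈ faces → t ⊆ s → t.Nonempty → t ∈ faces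

/-- A simplicial map between abstract simplicial complexes. -/
structure SMap {V W : Type} [DecidableEq W] (K : ASC V) (L : ASC W) where
  toFun : V → W
  maps_faces : ∀ {s : Finset V}, s ∈ K.faces → s.image toFun ∈ L.faces

namespace SMap

variable {V W U : Type} [DecidableEq V] [DecidableEq W] [DecidableEq U]
  {K : ASC V} {L : ASC W} {M : ASC U}

/-- The identity simplicial map. -/
def id (K : ASC V) : SMap K K :=
  ⟨fun v => v, by intro s hs; simpa using hs⟩

/-- Composition of simplicial maps. -/
def comp (ψ : SMap L M) (φ : SMap K L) : SMap K M :=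
  ⟨ψ.toFun ∘ φ.toFun, by
    intro s hs
    have h := ψ.maps_faces (φ.maps_faces hs)
    simpa [Finset.image_image] using h⟩

end SMap

/-- Two simplicial maps are contiguous if the images of each simplex under the two
maps together span a simplex. -/
def Contiguous {V W : Type} [DecidableEq W] {K : ASC V} {L : ASC W}
    (φ ψ : SMap K L) : Prop :=
  ∀ {s : Finset V}, s ∈ K.faces → (s.image φ.toFun ∪ s.image ψ.toFun) ∈ L.faces

/-- Being in the same contiguity class: the reflexive-transitive closure of
contiguity (`φ ∼ ψ`). -/
def CClass {V W : Type} [DecidableEq W] {K : ASC V} {L : ASC W}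
    (φ ψ : SMap K L) : Prop :=
  Relation.ReflTransGen Contiguous φ ψ

/-- The type of subcomplexes of `K`. -/
def ASC.Sub {V : Type} (K : ASC V) : Type :=
  {Ω : ASC V // Ω.faces ⊆ K.faces}

/-- Restriction of a simplicial map to a subcomplex of the domain. -/
def SMap.restrict {V W : Type} [DecidableEq W] {K : ASC V} {L : ASC W}
    (φ : SMap K L) (Ω : K.Sub) : SMap Ω.1 L :=
  ⟨φ.toFun, by intro s hs; exact φ.maps_faces (Ω.2 hs)⟩

/-- `SDle φ k` : the family `φ` has contiguity distance at most `k`, witnessed by a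
cover of `K` by `k+1` subcomplexes on each of which all the maps restrict into a
single contiguity class. -/
def SDle {V W : Type} [DecidableEq W] {K : ASC V} {L : ASC W} {n : ℕ}
    (φ : Fin n → SMap K L) (k : ℕ) : Prop :=
  ∃ Ω : Fin (k + 1) → K.Sub,
    (∀ s ∈ K.faces, ∃ j, s ∈ (Ω j).1.faces) ∧
    ∀ j i i', CClass ((φ i).restrict (Ω j)) ((φ i').restrict (Ω j))

/-- The `n`-th contiguity distance `SD(φ₁,…,φₙ)`, valued in `ℕ∞`. -/
noncomputable def SD {V W : Type} [DecidableEq W] {K : ASC V} {L : ASC W} {n : ℕ}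
    (φ : Fin n → SMap K L) : ℕ∞ :=
  sInf {m : ℕ∞ | ∃ k : ℕ, m = (k : ℕ∞) ∧ SDle φ k}

/-- `v` is a vertex of `K`. -/
def ASC.isVertex {V : Type} (K : ASC V) (v : V) : Prop :=
  ({v} : Finset V) ∈ K.faces

/-- The constant simplicial map at a vertex `v` of `L`. -/
def constMap {V W : Type} [DecidableEq W] (K : ASC V) (L : ASC W) {v : W}
    (hv : L.isVertex v) : SMap K L :=
  ⟨fun _ => v, by
    intro s hs
    rw [Finset.image_const (K.nonempty_of_mem hs) v]
    exact hv⟩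

/-- The inclusion of a subcomplex. -/
def incl {V : Type} [DecidableEq V] {K : ASC V} (Ω : K.Sub) : SMap Ω.1 K :=
  ⟨fun x => x, by intro s hs; simpa using Ω.2 hs⟩

/-- A subcomplex is categorical if its inclusion is in the same contiguity class
as a constant map. -/
def Categorical {V : Type} [DecidableEq V] {K : ASC V} (Ω : K.Sub) : Prop :=
  ∃ v : V, ∃ hv : K.isVertex v, CClass (incl Ω) (constMap Ω.1 K hv)

/-- `scatle K k` : `K` is covered by `k+1` categorical subcomplexes. -/
def scatle {V : Type} [DecidableEq V] (K : ASC V) (k : ℕ) : Prop :=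
  ∃ Ω : Fin (k + 1) → K.Sub,
    (∀ s ∈ K.faces, ∃ j, s ∈ (Ω j).1.faces) ∧ ∀ j, Categorical (Ω j)

/-- The simplicial Lusternik–Schnirelmann category, valued in `ℕ∞`. -/
noncomputable def scat {V : Type} [DecidableEq V] (K : ASC V) : ℕ∞ :=
  sInf {m : ℕ∞ | ∃ k : ℕ, m = (k : ℕ∞) ∧ scatle K k}

/-- The `n`-fold categorical product `Kⁿ`. -/
def ASC.prodPow {V : Type} [DecidableEq V] (K : ASC V) (n : ℕ) : ASC (Fin n → V) where
  faces := {s | s.Nonempty ∧ ∀ i : Fin n, s.image (fun f => f i) ∈ K.faces}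
  nonempty_of_mem := fun h => h.1
  down_closed := by
    intro s t hs hts ht
    refine ⟨ht, fun i => ?_⟩
    exact K.down_closed (hs.2 i) (Finset.image_subset_image (f := fun f => f i) hts)
      (ht.image _)

/-- Projection to the `i`-th factor of the categorical product. -/
def proj {V : Type} [DecidableEq V] (K : ASC V) (n : ℕ) (i : Fin n) :
    SMap (K.prodPow n) K :=
  ⟨fun f => f i, by intro s hs; exact hs.2 i⟩

/-- The diagonal simplicial map `K → Kⁿ`. -/
def diag {V : Type} [DecidableEq V] (K : ASC V) (n : ℕ) : SMap K (K.prodPow n) :=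
  ⟨fun v _ => v, by
    intro s hs
    refine ⟨(K.nonempty_of_mem hs).image _, fun i => ?_⟩
    have h : (s.image fun v (_ : Fin n) => v).image (fun f => f i) = s := by
      rw [Finset.image_image]
      exact Finset.image_id'
    rw [h]; exact hs⟩

/-- A subcomplex `Ω ⊆ Kⁿ` is `n`-Farber if the diagonal admits a section over `Ω`
up to contiguity class. -/
def IsFarber {V : Type} [DecidableEq V] {K : ASC V} {n : ℕ}
    (Ω : (K.prodPow n).Sub) : Prop :=
  ∃ σ : SMap Ω.1 K, CClass ((diag K n).comp σ) (incl Ω)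

/-- `dTCle K n k` : `Kⁿ` is covered by `k+1` `n`-Farber subcomplexes. -/
def dTCle {V : Type} [DecidableEq V] (K : ASC V) (n k : ℕ) : Prop :=
  ∃ Ω : Fin (k + 1) → (K.prodPow n).Sub,
    (∀ s ∈ (K.prodPow n).faces, ∃ j, s ∈ (Ω j).1.faces) ∧ ∀ j, IsFarber (Ω j)

/-- The `n`-th discrete topological complexity, valued in `ℕ∞`. -/
noncomputable def dTC {V : Type} [DecidableEq V] (K : ASC V) (n : ℕ) : ℕ∞ :=
  sInf {m : ℕ∞ | ∃ k : ℕ, m = (k : ℕ∞) ∧ dTCle K n k}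

/-- `K` is edge-path connected: any two vertices are joined by a finite edge path. -/
def ASC.EPConn {V : Type} [DecidableEq V] (K : ASC V) : Prop :=
  ∀ u v : V, K.isVertex u → K.isVertex v →
    Relation.ReflTransGen (fun a b => ({a, b} : Finset V) ∈ K.faces) u v

/-- `K` is strongly collapsible: the identity is in the same contiguity class as a
constant map. -/
def StronglyCollapsible {V : Type} [DecidableEq V] (K : ASC V) : Prop :=
  ∃ v : V, ∃ hv : K.isVertex v, CClass (SMap.id K) (constMap K K hv)

/-- `μ` is a right strong equivalence: it has a right strong homotopy inverse. -/
def RightStrongEq {V W : Type} [DecidableEq V] [DecidableEq W]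
    {K : ASC V} {L : ASC W} (μ : SMap K L) : Prop :=
  ∃ α : SMap L K, CClass (μ.comp α) (SMap.id L)

/-- `μ` is a left strong equivalence: it has a left strong homotopy inverse. -/
def LeftStrongEq {V W : Type} [DecidableEq V] [DecidableEq W]
    {K : ASC V} {L : ASC W} (μ : SMap K L) : Prop :=
  ∃ β : SMap L K, CClass (β.comp μ) (SMap.id K)

/-- The barycentric subdivision of `K`: vertices are the simplices of `K`, and
simplices are chains of simplices of `K`. -/
def ASC.sd {V : Type} (K : ASC V) : ASC (Finset V) where
  faces := {S | S.Nonempty ∧ (∀ σ ∈ S, σ ∈ K.faces) ∧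
    ∀ σ ∈ S, ∀ τ ∈ S, σ ⊆ τ ∨ τ ⊆ σ}
  nonempty_of_mem := fun h => h.1
  down_closed := fun hS hTS hT =>
    ⟨hT, fun σ hσ => hS.2.1 σ (hTS hσ), fun σ hσ τ hτ => hS.2.2 σ (hTS hσ) τ (hTS hτ)⟩

/-- The induced simplicial map on barycentric subdivisions. -/
def SMap.sd {V W : Type} [DecidableEq V] [DecidableEq W] {K : ASC V} {L : ASC W}
    (φ : SMap K L) : SMap K.sd L.sd :=
  ⟨fun σ => σ.image φ.toFun, by
    intro S hS
    refine ⟨hS.1.image _, ?_, ?_⟩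
    · intro τ hτ
      simp only [Finset.mem_image] at hτ
      obtain ⟨σ, hσ, rfl⟩ := hτ
      exact φ.maps_faces (hS.2.1 σ hσ)
    · intro τ₁ h₁ τ₂ h₂
      simp only [Finset.mem_image] at h₁ h₂
      obtain ⟨σ₁, hσ₁, rfl⟩ := h₁
      obtain ⟨σ₂, hσ₂, rfl⟩ := h₂
      rcases hS.2.2 σ₁ hσ₁ σ₂ hσ₂ with h | h
      · exact Or.inl (Finset.image_subset_image h)
      · exact Or.inr (Finset.image_subset_image h)⟩


/-- The simplicial map `K^n → K^{n+1}` inserting the vertex `v₀` in the `j`-th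
coordinate. -/
def insMap {V : Type} [DecidableEq V] (K : ASC V) (n : ℕ) {v₀ : V}
    (hv : K.isVertex v₀) (j : Fin (n + 1)) :
    SMap (K.prodPow n) (K.prodPow (n + 1)) :=
  ⟨fun f => (j.insertNth v₀ f : Fin (n + 1) → V), by
    intro s hs
    refine ⟨hs.1.image _, fun i => ?_⟩
    rw [Finset.image_image]
    by_cases h : i = j
    · subst h
      have heq : ((fun g : Fin (n + 1) → V => g i) ∘
          fun f : Fin n → V => (i.insertNth v₀ f : Fin (n + 1) → V))
          = fun _ : Fin n → V => v₀ := by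
        funext f; simp
      rw [heq, Finset.image_const hs.1 v₀]
      exact hv
    · obtain ⟨k, rfl⟩ := Fin.exists_succAbove_eq h
      have heq : ((fun g : Fin (n + 1) → V => g (j.succAbove k)) ∘
          fun f : Fin n → V => (j.insertNth v₀ f : Fin (n + 1) → V))
          = fun f : Fin n → V => f k := by
        funext f; simp
      rw [heq]
      exact hs.2 k⟩

/-! On a categorical subcomplex `Ω ⊆ Kⁿ`, all maps into the edge-path connected complex
`Kⁿ⁺¹` lie in one contiguity class, since each factors through a constant map up to
contiguity. Conversely, deleting coordinate `j + 1` after inserting `v₀` at position `j + 1`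
or at position `j` yields the identity or the map resetting coordinate `j` to `v₀`; so if
all insertions agree on `Ω` up to contiguity, one may reset the coordinates one at a time,
joining the inclusion of `Ω` to the constant map at `(v₀, …, v₀)`. -/

lemma Fin.succ_succAbove_of_ne {n : ℕ} {j k : Fin n} (h : k ≠ j) :
    j.succ.succAbove k = j.castSucc.succAbove k := by
  rw [Fin.ne_iff_vne] at h
  simp only [Fin.succAbove, Fin.lt_def, Fin.val_succ, Fin.val_castSucc]
  split_ifs <;> first | rfl | (exfalso; omega)

variable {V W U : Type} [DecidableEq W] [DecidableEq U] {K : ASC V} {L : ASC W} {M : ASC U}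

@[ext]
lemma SMap.ext {φ ψ : SMap K L} (h : φ.toFun = ψ.toFun) : φ = ψ := by
  cases φ; cases ψ; congr

lemma SMap.isVertex_apply (φ : SMap K L) {v : V} (hv : K.isVertex v) :
    L.isVertex (φ.toFun v) := by
  simpa [ASC.isVertex] using φ.maps_faces hv

lemma SMap.comp_assoc {X Y : Type} {P : ASC X} {Q : ASC Y} [DecidableEq Y] (φ : SMap M Q)
    (ψ : SMap L M) (χ : SMap P L) : (φ.comp ψ).comp χ = φ.comp (ψ.comp χ) :=
  rfl

lemma SMap.comp_id [DecidableEq V] (φ : SMap K L) : φ.comp (SMap.id K) = φ :=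
  rfl

lemma SMap.comp_restrict (μ : SMap L M) (φ : SMap K L) (Ω : K.Sub) :
    μ.comp (φ.restrict Ω) = (μ.comp φ).restrict Ω :=
  rfl

lemma SMap.restrict_eq_comp_incl [DecidableEq V] (φ : SMap K L) (Ω : K.Sub) :
    φ.restrict Ω = φ.comp (incl Ω) :=
  rfl

lemma SMap.comp_constMap {X : Type} (P : ASC X) (φ : SMap L M) {w : W} (hw : L.isVertex w) :
    φ.comp (constMap P L hw) = constMap P M (φ.isVertex_apply hw) :=
  rfl

lemma Contiguous.symm {φ ψ : SMap K L} (h : Contiguous φ ψ) : Contiguous ψ φ := by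
  intro s hs
  rw [Finset.union_comm]
  exact h hs

lemma CClass.symm {φ ψ : SMap K L} (h : CClass φ ψ) : CClass ψ φ := by
  induction h with
  | refl => exact .refl
  | tail _ hc ih => exact .head hc.symm ih

lemma Contiguous.comp_left (μ : SMap L M) {φ ψ : SMap K L} (h : Contiguous φ ψ) :
    Contiguous (μ.comp φ) (μ.comp ψ) := by
  intro s hs
  simpa [SMap.comp, Finset.image_union, Finset.image_image] using μ.maps_faces (h hs)

lemma CClass.comp_left (μ : SMap L M) {φ ψ : SMap K L} (h : CClass φ ψ) :
    CClass (μ.comp φ) (μ.comp ψ) :=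
  h.lift μ.comp fun _ _ => Contiguous.comp_left μ

lemma cclass_constMap_of_EPConn {X : Type} (P : ASC X) (hL : L.EPConn) {a b : W}
    (ha : L.isVertex a) (hb : L.isVertex b) :
    CClass (constMap P L ha) (constMap P L hb) := by
  induction hL a b ha hb with
  | refl => exact .refl
  | @tail c d _ hcd ih =>
    have hc : L.isVertex c := L.down_closed hcd (by simp) (Finset.singleton_nonempty c)
    refine (ih hc).tail fun {s} hs => ?_
    have hne := P.nonempty_of_mem hs
    change s.image (fun _ => c) ∪ s.image (fun _ => d) ∈ L.faces
    rwa [Finset.image_const hne, Finset.image_const hne]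

variable [DecidableEq V]

lemma Categorical.cclass_restrict {Ω : K.Sub} (hΩ : Categorical Ω) (hL : L.EPConn)
    (φ ψ : SMap K L) : CClass (φ.restrict Ω) (ψ.restrict Ω) := by
  obtain ⟨w, hw, hincl⟩ := hΩ
  have hconst : ∀ χ : SMap K L,
      CClass (χ.restrict Ω) (constMap Ω.1 L (χ.isVertex_apply hw)) := fun χ => by
    simpa only [SMap.restrict_eq_comp_incl, SMap.comp_constMap] using hincl.comp_left χ
  exact ((hconst φ).trans (cclass_constMap_of_EPConn _ hL _ _)).trans (hconst ψ).symm

namespace ASC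

lemma isVertex_prodPow_iff {n : ℕ} {a : Fin n → V} :
    (K.prodPow n).isVertex a ↔ ∀ k, K.isVertex (a k) := by
  simp [ASC.isVertex, ASC.prodPow]

lemma update_pair_mem_prodPow_faces {n : ℕ} {a : Fin n → V}
    (ha : (K.prodPow n).isVertex a) (i : Fin n) {c d : V} (hcd : ({c, d} : Finset V) ∈ K.faces) :
    ({Function.update a i c, Function.update a i d} : Finset (Fin n → V)) ∈
      (K.prodPow n).faces := by
  refine ⟨by simp, fun k => ?_⟩
  rcases eq_or_ne k i with rfl | hk
  · simpa [Finset.image_insert] using hcd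
  · simpa [ASC.isVertex, Finset.image_insert, Function.update_of_ne hk] using
      isVertex_prodPow_iff.1 ha k

lemma EPConn.prodPow (hK : K.EPConn) (n : ℕ) : (K.prodPow n).EPConn := by
  intro a b ha hb
  suffices h : ∀ S : Finset (Fin n), ∀ a, (K.prodPow n).isVertex a →
      (∀ k ∉ S, a k = b k) → Relation.ReflTransGen (fun f g => ({f, g} : Finset (Fin n → V)) ∈ (K.prodPow n).faces)
        a b from
    h Finset.univ a ha fun k hk => absurd (Finset.mem_univ k) hk
  intro S
  induction S using Finset.induction_on with
  | empty =>
    intro a _ hab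
    obtain rfl : a = b := funext fun k => hab k (Finset.notMem_empty k)
    exact .refl
  | @insert i S _ ih =>
    intro a ha hab
    have hb' := isVertex_prodPow_iff.1 hb
    have hpath : Relation.ReflTransGen
        (fun f g => ({f, g} : Finset (Fin n → V)) ∈ (K.prodPow n).faces)
        (Function.update a i (a i)) (Function.update a i (b i)) :=
      (hK (a i) (b i) (isVertex_prodPow_iff.1 ha i) (hb' i)).lift _
        fun _ _ => update_pair_mem_prodPow_faces ha i
    rw [Function.update_eq_self] at hpath
    refine hpath.trans (ih _ ?_ fun k hk => ?_)
    · refine isVertex_prodPow_iff.2 fun k => ?_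
      rcases eq_or_ne k i with rfl | hk
      · simpa using hb' k
      · simpa [Function.update_of_ne hk] using isVertex_prodPow_iff.1 ha k
    · rcases eq_or_ne k i with rfl | hki
      · simp
      · rw [Function.update_of_ne hki]
        exact hab k (by simp [hki, hk])

lemma isVertex_prodPow_const {v : V} (hv : K.isVertex v) (n : ℕ) :
    (K.prodPow n).isVertex fun _ => v :=
  isVertex_prodPow_iff.2 fun _ => hv

end ASC

def reindexMap (K : ASC V) {m n : ℕ} (e : Fin m → Fin n) :
    SMap (K.prodPow n) (K.prodPow m) :=
  ⟨fun x => x ∘ e, fun hs => ⟨hs.1.image _, fun i => by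
    rw [Finset.image_image]
    exact hs.2 (e i)⟩⟩

def replaceMap (K : ASC V) {n : ℕ} {v₀ : V} (hv : K.isVertex v₀) (S : Finset (Fin n)) :
    SMap (K.prodPow n) (K.prodPow n) :=
  ⟨fun x k => if k ∈ S then v₀ else x k, fun {s} hs => ⟨hs.1.image _, fun i => by
    rw [Finset.image_image]
    by_cases hi : i ∈ S
    · simpa [ASC.isVertex, Function.comp_def, hi, Finset.image_const hs.1] using hv
    · simpa [Function.comp_def, hi] using hs.2 i⟩⟩

section

variable {n : ℕ} {v₀ : V} (hv : K.isVertex v₀)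

lemma replaceMap_empty : replaceMap K hv (∅ : Finset (Fin n)) = SMap.id _ := by
  ext x k
  simp [replaceMap, SMap.id]

lemma replaceMap_insert (i : Fin n) (S : Finset (Fin n)) :
    replaceMap K hv (insert i S) = (replaceMap K hv S).comp (replaceMap K hv {i}) := by
  ext x k
  by_cases hk : k = i <;> simp [replaceMap, SMap.comp, hk]

lemma replaceMap_univ_restrict (Ω : (K.prodPow n).Sub) :
    (replaceMap K hv Finset.univ).restrict Ω =
      constMap Ω.1 _ (K.isVertex_prodPow_const hv n) := by
  apply SMap.ext
  funext x k
  simp [replaceMap, SMap.restrict, constMap]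

lemma reindexMap_comp_insMap_self (j : Fin (n + 1)) :
    (reindexMap K j.succAbove).comp (insMap K n hv j) = SMap.id _ := by
  ext x k
  simp [reindexMap, insMap, SMap.comp, SMap.id]

lemma reindexMap_comp_insMap_castSucc (j : Fin n) :
    (reindexMap K j.succ.succAbove).comp (insMap K n hv j.castSucc) = replaceMap K hv {j} := by
  ext x k
  simp only [reindexMap, insMap, SMap.comp, replaceMap, Function.comp_apply,
    Finset.mem_singleton]
  split_ifs with hk
  · simp [hk, Fin.succAbove_succ_self]
  · rw [Fin.succ_succAbove_of_ne hk, Fin.insertNth_apply_succAbove]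

lemma categorical_of_cclass_insMap {Ω : (K.prodPow n).Sub}
    (h : ∀ j : Fin n, CClass ((insMap K n hv j.succ).restrict Ω)
      ((insMap K n hv j.castSucc).restrict Ω)) :
    Categorical Ω := by
  have hstep : ∀ (r : SMap (K.prodPow n) (K.prodPow n)) (j : Fin n),
      CClass (r.restrict Ω) ((r.comp (replaceMap K hv {j})).restrict Ω) := fun r j => by
    have := (h j).comp_left (r.comp (reindexMap K j.succ.succAbove))
    rwa [SMap.comp_restrict, SMap.comp_restrict, SMap.comp_assoc, SMap.comp_assoc,
      reindexMap_comp_insMap_self, reindexMap_comp_insMap_castSucc, SMap.comp_id] at this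
  have hreset : ∀ S, CClass (incl Ω) ((replaceMap K hv S).restrict Ω) := fun S => by
    induction S using Finset.induction_on with
    | empty => rw [replaceMap_empty]; exact .refl
    | @insert i S _ ih => rw [replaceMap_insert]; exact ih.trans (hstep _ i)
  exact ⟨_, _, replaceMap_univ_restrict hv Ω ▸ hreset Finset.univ⟩

end

lemma scatle_prodPow_iff_SDle_insMap (hK : K.EPConn) (n : ℕ) {v₀ : V}
    (hv : K.isVertex v₀) (k : ℕ) :
    scatle (K.prodPow n) k ↔ SDle (fun j : Fin (n + 1) => insMap K n hv j) k := by
  constructor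
  · rintro ⟨Ω, hcov, hcat⟩
    exact ⟨Ω, hcov, fun j i i' => (hcat j).cclass_restrict (hK.prodPow (n + 1)) _ _⟩
  · rintro ⟨Ω, hcov, hcc⟩
    exact ⟨Ω, hcov, fun j => categorical_of_cclass_insMap hv fun i => hcc j _ _⟩

/-- `scat(K^{n-1}) = SD(i₁,…,iₙ)` for the insertion maps. -/
theorem scat_prodPow_eq_SD_insMap {V : Type} [DecidableEq V] (K : ASC V)
    (hK : K.EPConn) (n : ℕ) {v₀ : V} (hv : K.isVertex v₀) :
    scat (K.prodPow n) = SD (fun j : Fin (n + 1) => insMap K n hv j) := by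
  simp only [scat, SD, scatle_prodPow_iff_SDle_insMap hK n hv]
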